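/- For every natural number n, the n-th power of à satisfies Ô¿â¿ = !![1, n, 3*n*(n+4), n*(n+1)*(4*n+1); 0, 1, n, 2*n*(n+1); 0, 0, 1, 4*n; 0, 0, 0, 1] as a matrix over ZMod 5 (where n is interpreted in ZMod 5). -/

import Mathlib

/-!
`Atil = Ntil + 1` with `Ntil` strictly upper triangular, so `Ntil ^ 4 = 0` and the binomial
theorem gives
`Atil ^ n = 1 + n • Ntil + (n choose 2) • Ntil ^ 2 + (n choose 3) • Ntil ^ 3`.
In `ZMod 5` we have `2⁻¹ = 3` and `6 = 1`, so `n choose 2 = 3 n (n - 1)` and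
`n choose 3 = n (n - 1) (n - 2)` are polynomials in `n`.
-/

open Matrix

/-- The reduction mod 5 of `P⁻¹A⁻¹P`, where `A` is the local monodromy of the
quintic-mirror family around `λ = 0`. -/
def Atil : Matrix (Fin 4) (Fin 4) (ZMod 5) :=
  !![1, 1, 0, 0; 0, 1, 1, 4; 0, 0, 1, 4; 0, 0, 0, 1]

open Finset

theorem add_one_pow_eq_sum_range_of_pow_eq_zero {R : Type*} [Semiring R] {N : R} {m : ℕ}
    (hN : N ^ m = 0) (n : ℕ) :
    (N + 1) ^ n = ∑ k ∈ range m, n.choose k • N ^ k := by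
  rw [(Commute.one_right N).add_pow]
  simp only [one_pow, mul_one, ← Nat.cast_comm, ← nsmul_eq_mul]
  calc ∑ k ∈ range (n + 1), n.choose k • N ^ k
      = ∑ k ∈ range (max (n + 1) m), n.choose k • N ^ k := by
        refine sum_subset (range_mono (le_max_left _ _)) fun k _ hk => ?_
        rw [Nat.choose_eq_zero_of_lt (by simpa using hk), zero_smul]
    _ = ∑ k ∈ range m, n.choose k • N ^ k := by
        refine (sum_subset (range_mono (le_max_right _ _)) fun k _ hk => ?_).symm
        rw [pow_eq_zero_of_le (by simpa using hk) hN, smul_zero]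

theorem Nat.two_mul_cast_choose_two {R : Type*} [Ring R] (n : ℕ) :
    2 * (n.choose 2 : R) = n * (n - 1) := by
  rw [← Nat.cast_descFactorial_two, Nat.descFactorial_eq_factorial_mul_choose]
  push_cast [Nat.factorial_two]
  rfl

theorem Nat.six_mul_cast_choose_three {R : Type*} [Ring R] (n : ℕ) :
    6 * (n.choose 3 : R) = n * (n - 1) * (n - 2) := by
  have h := descPochhammer_eval_eq_descFactorial R n 3
  rw [Nat.descFactorial_eq_factorial_mul_choose] at h
  simp only [descPochhammer_succ_eval, descPochhammer_zero, Polynomial.eval_one] at h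
  norm_num [Nat.factorial] at h
  rw [← h]

theorem natCast_choose_two_zmod_five (n : ℕ) :
    (n.choose 2 : ZMod 5) = 3 * n * (n + 4) := by
  linear_combination (norm := ring_nf) 3 * Nat.two_mul_cast_choose_two (R := ZMod 5) n
  reduce_mod_char

theorem natCast_choose_three_zmod_five (n : ℕ) :
    (n.choose 3 : ZMod 5) = n * (n + 4) * (n + 3) := by
  linear_combination (norm := ring_nf) Nat.six_mul_cast_choose_three (R := ZMod 5) n
  reduce_mod_char

def Ntil : Matrix (Fin 4) (Fin 4) (ZMod 5) :=
  !![0, 1, 0, 0; 0, 0, 1, 4; 0, 0, 0, 4; 0, 0, 0, 0]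

theorem Atil_eq_Ntil_add_one : Atil = Ntil + 1 := by decide

theorem Ntil_sq : Ntil ^ 2 = !![0, 0, 1, 4; 0, 0, 0, 4; 0, 0, 0, 0; 0, 0, 0, 0] := by decide

theorem Ntil_pow_three : Ntil ^ 3 = !![0, 0, 0, 4; 0, 0, 0, 0; 0, 0, 0, 0; 0, 0, 0, 0] := by
  decide

theorem Ntil_pow_four : Ntil ^ 4 = 0 := by decide

theorem Atil_pow (n : ℕ) :
    Atil ^ n =
      !![1, (n : ZMod 5), 3 * n * (n + 4), n * (n + 1) * (4 * n + 1);
         0, 1, (n : ZMod 5), 2 * n * (n + 1);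
         0, 0, 1, 4 * (n : ZMod 5);
         0, 0, 0, 1] := by
  have binomial :
      Atil ^ n = 1 + n • Ntil + n.choose 2 • Ntil ^ 2 + n.choose 3 • Ntil ^ 3 := by
    rw [Atil_eq_Ntil_add_one, add_one_pow_eq_sum_range_of_pow_eq_zero Ntil_pow_four]
    simp only [sum_range_succ, sum_range_zero, Nat.choose_zero_right, Nat.choose_one_right,
      pow_zero, pow_one, one_smul, zero_add]
  rw [binomial, Ntil_sq, Ntil_pow_three, Ntil]
  ext i j
  fin_cases i <;> fin_cases j <;>
    simp [natCast_choose_two_zmod_five, natCast_choose_three_zmod_five] <;>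
    ring_nf <;> reduce_mod_char
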